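/- Minimum labelings of geometric lattices are EW-labelings: let L be a finite geometric lattice with atom set A(L) totally ordered, and define λ(x ⋖ y) to be the smallest atom a with x ∨ a = y. Then λ is an ER-labeling satisfying the rank two switching property, and in each interval each maximal chain is uniquely determined by its word of labels. -/

import Mathlib

attribute [local instance] Classical.propDecidable

/-- The Möbius function of a finite poset (preorder suffices for the recursion),
defined by `μ x x = 1` and `μ x y = -∑_{x ≤ z < y} μ x z`. -/
noncomputable def mobius {P : Type} [Preorder P] [Fintype P] (x : P) : P → ℤ
  | y =>
    if x = y then 1
    else -∑ z ∈ (Finset.univ.filter fun z : P => x ≤ z ∧ z < y).attach, mobius x z.1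
termination_by y => (Finset.univ.filter fun z : P => z < y).card
decreasing_by
  have hz := z.2
  simp only [Finset.mem_filter] at hz
  refine Finset.card_lt_card ((Finset.ssubset_iff_of_subset fun w hw => ?_).mpr ⟨z.1, ?_, ?_⟩)
  · simp only [Finset.mem_filter] at hw ⊢
    exact ⟨hw.1, hw.2.trans hz.2.2⟩
  · simp only [Finset.mem_filter]
    exact ⟨Finset.mem_univ _, hz.2.2⟩
  · simp only [Finset.mem_filter, not_and]
    exact fun _ => lt_irrefl _

/-- The `k`-th Whitney number of the first kind of a finite graded poset with
minimum `b` and rank function `ρ`: `w_k = ∑_{ρ x = k} μ(b, x)`. -/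
noncomputable def whitney1 {P : Type} [Preorder P] [Fintype P] (ρ : P → ℕ) (b : P) (k : ℕ) : ℤ :=
  ∑ x ∈ Finset.univ.filter fun x : P => ρ x = k, mobius b x

/-- The `k`-th Whitney number of the second kind: the number of elements of rank `k`. -/
noncomputable def whitney2 {P : Type} [Preorder P] [Fintype P] (ρ : P → ℕ) (k : ℕ) : ℕ :=
  (Finset.univ.filter fun x : P => ρ x = k).card
/-- A saturated chain in a poset: a nonempty list of elements in which each
consecutive pair is a covering relation. -/
def IsSatChain {P : Type} [PartialOrder P] (l : List P) : Prop :=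
  l ≠ [] ∧ l.Chain' (· ⋖ ·)

/-- A saturated (maximal) chain of the closed interval `[x, y]`: a saturated chain
starting at `x` and ending at `y`. -/
def SatChainIn {P : Type} [PartialOrder P] (x y : P) (l : List P) : Prop :=
  IsSatChain l ∧ l.head? = some x ∧ l.getLast? = some y

/-- The word of labels of a chain `x₀ ⋖ x₁ ⋖ ⋯ ⋖ x_ℓ` under the edge labeling `lab`,
namely `lab x₀ x₁, lab x₁ x₂, …, lab x_{ℓ-1} x_ℓ`. -/
def labelWord {P Λ : Type} (lab : P → P → Λ) (l : List P) : List Λ :=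
  (l.zip l.tail).map fun q => lab q.1 q.2

/-- A word of labels is (strictly) increasing. -/
def IsIncreasing {Λ : Type} [Preorder Λ] (w : List Λ) : Prop := w.Chain' (· < ·)

/-- A word of labels is ascent-free: no two consecutive labels strictly increase. -/
def IsAscentFree {Λ : Type} [Preorder Λ] (w : List Λ) : Prop :=
  w.Chain' fun a b => ¬ a < b

/-- An ER-labeling: every closed interval `[x,y]` has a unique increasing maximal chain. -/
def IsER {P Λ : Type} [PartialOrder P] [Preorder Λ] (lab : P → P → Λ) : Prop :=
  ∀ x y : P, x ≤ y → ∃! l : List P, SatChainIn x y l ∧ IsIncreasing (labelWord lab l)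

/-- An ER*-labeling: every closed interval `[x,y]` has a unique ascent-free maximal chain. -/
def IsERStar {P Λ : Type} [PartialOrder P] [Preorder Λ] (lab : P → P → Λ) : Prop :=
  ∀ x y : P, x ≤ y → ∃! l : List P, SatChainIn x y l ∧ IsAscentFree (labelWord lab l)

/-- The chain `l` has an ascent at rank `i ≥ 1`: the `(i-1)`-st and `i`-th entries of its
label word (0-indexed), i.e. the labels of the covers at ranks `i` and `i+1`,
strictly increase. -/
def HasAscentAt {P Λ : Type} [PartialOrder P] [Preorder Λ] (lab : P → P → Λ)
    (l : List P) (i : ℕ) : Prop :=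
  IsSatChain l ∧ 1 ≤ i ∧
    ∃ a b, (labelWord lab l)[i-1]? = some a ∧ (labelWord lab l)[i]? = some b ∧ a < b

/-- `l'` is obtained from `l` by a quadratic exchange at rank `i`: it is a saturated
chain agreeing with `l` everywhere except (possibly) at position `i`, and its label
word is that of `l` with the labels at positions `i-1` and `i` interchanged. -/
def IsSwapAt {P Λ : Type} [PartialOrder P] [Preorder Λ] (lab : P → P → Λ)
    (l : List P) (i : ℕ) (l' : List P) : Prop :=
  IsSatChain l' ∧ l'.length = l.length ∧ (∀ m : ℕ, m ≠ i → l'[m]? = l[m]?) ∧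
    ∃ a b, (labelWord lab l)[i-1]? = some a ∧ (labelWord lab l)[i]? = some b ∧
      labelWord lab l' = ((labelWord lab l).set (i-1) b).set i a

/-- The rank two switching property: every saturated chain with an ascent at rank `i`
admits a unique chain, differing from it only at rank `i`, whose labels at the two
corresponding positions are interchanged and whose other labels agree. -/
def RankTwoSwitch {P Λ : Type} [PartialOrder P] [Preorder Λ] (lab : P → P → Λ) : Prop :=
  ∀ l : List P, ∀ i : ℕ, HasAscentAt lab l i → ∃! l' : List P, IsSwapAt lab l i l'

/-- The quadratic exchange operator `U_i` at rank `i`: performs the quadratic exchange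
at rank `i` if the chain has an ascent there, and is the identity otherwise. -/
noncomputable def Uop {P Λ : Type} [PartialOrder P] [Preorder Λ] {lab : P → P → Λ}
    (hR : RankTwoSwitch lab) (i : ℕ) (l : List P) : List P :=
  if h : HasAscentAt lab l i then (hR l i h).exists.choose else l

/-- One-step quadratic exchange relation on saturated chains. -/
def QExStep {P Λ : Type} [PartialOrder P] [Preorder Λ] (lab : P → P → Λ)
    (l l' : List P) : Prop :=
  ∃ i : ℕ, HasAscentAt lab l i ∧ IsSwapAt lab l i l'

/-- Two saturated chains are equivalent if they are connected by quadratic exchanges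
(i.e., lie in the same connected component of the exchange graph). -/
def ChainEquiv {P Λ : Type} [PartialOrder P] [Preorder Λ] (lab : P → P → Λ)
    (l l' : List P) : Prop :=
  Relation.EqvGen (QExStep lab) l l'

/-- The chain `l` has a double ascent (critical condition) at rank `i`. -/
def DoubleAscentAt {P Λ : Type} [PartialOrder P] [Preorder Λ] (lab : P → P → Λ)
    (l : List P) (i : ℕ) : Prop :=
  HasAscentAt lab l i ∧ HasAscentAt lab l (i+1)

/-- The braid relation for the quadratic exchange operators: on any saturated chain with
a double ascent at rank `i`, `U_i U_{i+1} U_i = U_{i+1} U_i U_{i+1}`. -/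
def BraidRel {P Λ : Type} [PartialOrder P] [Preorder Λ] {lab : P → P → Λ}
    (hR : RankTwoSwitch lab) : Prop :=
  ∀ (l : List P) (i : ℕ), DoubleAscentAt lab l i →
    Uop hR i (Uop hR (i+1) (Uop hR i l)) = Uop hR (i+1) (Uop hR i (Uop hR (i+1) l))

/-- The cancellative property: if `c` is a saturated chain of `[z,x]` and `c₁, c₂` are
saturated chains of `[x,y]` with `c ∪ c₁` and `c ∪ c₂` related by quadratic exchanges,
then `c₁` and `c₂` are related by quadratic exchanges. -/
def Cancellative {P Λ : Type} [PartialOrder P] [Preorder Λ] (lab : P → P → Λ) : Prop :=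
  ∀ (z x y : P) (c c₁ c₂ : List P), SatChainIn z x c → SatChainIn x y c₁ →
    SatChainIn x y c₂ → ChainEquiv lab (c ++ c₁.tail) (c ++ c₂.tail) →
      ChainEquiv lab c₁ c₂

/-!
For a cover `x ⋖ y` and an atom `a`, `x ⊔ a = y` just says `a ≤ y` and `a ≰ x`, so `λ(x ⋖ y)` is
the least atom below `y` but not below `x`, and `y = x ⊔ λ(x ⋖ y)`. Hence distinct upper covers
of `x` carry distinct labels, and a chain is determined by its start and its word of labels.

An increasing chain of `[x, y]` crosses the least atom `a ≤ y`, `a ≰ x` at some step whose label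
is at most `a`; its first label is no larger, so it equals `a`, and the chain begins with
`x ⋖ x ⊔ a`. This gives uniqueness, and prepending `x ⋖ x ⊔ a` to the increasing chain of
`[x ⊔ a, y]` gives existence.

For an ascent `u ⋖ v ⋖ w` with labels `a < b`, the only candidate for a switched middle element
is `u ⊔ b`. It covers `u` and meets `v` in `u`, so semimodularity makes `w = v ⊔ (u ⊔ b)` cover
it, and the minimality of `a` and `b` shows that the labels of `u ⋖ u ⊔ b ⋖ w` are `b, a`.
-/

section Chains

variable {P Λ : Type} {lab : P → P → Λ}

@[simp] lemma labelWord_singleton (p : P) : labelWord lab [p] = [] := rfl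

@[simp] lemma labelWord_cons_cons (p q : P) (l : List P) :
    labelWord lab (p :: q :: l) = lab p q :: labelWord lab (q :: l) := rfl

lemma getElem?_labelWord {l : List P} {j : ℕ} :
    (labelWord lab l)[j]? = (l[j]?.map lab).bind fun g => l[j + 1]?.map g := by
  rw [labelWord, List.map_zip_eq_zipWith, List.getElem?_zipWith', List.getElem?_tail]
  rfl

lemma getElem?_labelWord_eq_some {l : List P} {j : ℕ} {c : Λ} :
    (labelWord lab l)[j]? = some c ↔
      ∃ u v, l[j]? = some u ∧ l[j + 1]? = some v ∧ lab u v = c := by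
  rw [labelWord, List.map_zip_eq_zipWith, List.getElem?_zipWith_eq_some, List.getElem?_tail]
  rfl

lemma List.IsChain.rel_of_getElem? {R : P → P → Prop} {l : List P} (h : l.IsChain R) {j : ℕ}
    {u v : P} (hu : l[j]? = some u) (hv : l[j + 1]? = some v) : R u v := by
  obtain ⟨hj, rfl⟩ := List.getElem?_eq_some_iff.1 hu
  obtain ⟨hj', rfl⟩ := List.getElem?_eq_some_iff.1 hv
  exact h.getElem j hj'

lemma List.isChain_of_getElem? {R : P → P → Prop} {l : List P}
    (h : ∀ j u v, l[j]? = some u → l[j + 1]? = some v → R u v) : l.IsChain R :=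
  List.isChain_iff_getElem.2 fun j hj =>
    h j _ _ (List.getElem?_eq_getElem (by omega)) (List.getElem?_eq_getElem hj)

variable [PartialOrder P] {x y : P}

lemma satChainIn_singleton_iff {p : P} : SatChainIn x y [p] ↔ p = x ∧ x = y := by
  simp only [SatChainIn, IsSatChain, List.head?_cons, List.getLast?_singleton,
    Option.some.injEq]
  exact ⟨fun h => ⟨h.2.1, h.2.1 ▸ h.2.2⟩, fun h => ⟨⟨List.cons_ne_nil _ _,
    List.isChain_singleton _⟩, h.1, h.1 ▸ h.2⟩⟩

lemma satChainIn_cons_cons_iff {p q : P} {l : List P} :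
    SatChainIn x y (p :: q :: l) ↔ p = x ∧ x ⋖ q ∧ SatChainIn q y (q :: l) := by
  simp only [SatChainIn, IsSatChain, List.head?_cons, List.getLast?_cons_cons,
    Option.some.injEq, ne_eq, reduceCtorEq, not_false_eq_true, true_and]
  constructor
  · rintro ⟨hc, rfl, hl⟩
    exact ⟨rfl, (List.isChain_cons_cons.1 hc).1, (List.isChain_cons_cons.1 hc).2, hl⟩
  · rintro ⟨rfl, hpq, hc, hl⟩
    exact ⟨List.isChain_cons_cons.2 ⟨hpq, hc⟩, rfl, hl⟩

lemma SatChainIn.le {l : List P} (h : SatChainIn x y l) : x ≤ y := by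
  induction l generalizing x with
  | nil => simp [SatChainIn] at h
  | cons p l ih =>
    cases l with
    | nil => exact (satChainIn_singleton_iff.1 h).2.le
    | cons q l =>
      obtain ⟨-, hxq, h⟩ := satChainIn_cons_cons_iff.1 h
      exact hxq.le.trans (ih h)

lemma SatChainIn.lt_of_cons_cons {p q : P} {l : List P}
    (h : SatChainIn x y (p :: q :: l)) : x < y :=
  (satChainIn_cons_cons_iff.1 h).2.1.lt.trans_le (satChainIn_cons_cons_iff.1 h).2.2.le

lemma SatChainIn.exists_covBy_mem_labelWord {l : List P} (h : SatChainIn x y l) {p : P → Prop}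
    (hx : ¬ p x) (hy : p y) :
    ∃ u v, u ⋖ v ∧ ¬ p u ∧ p v ∧ lab u v ∈ labelWord lab l := by
  induction l generalizing x with
  | nil => simp [SatChainIn] at h
  | cons r l ih =>
    cases l with
    | nil => exact absurd ((satChainIn_singleton_iff.1 h).2 ▸ hy) hx
    | cons q l =>
      obtain ⟨rfl, hxq, h⟩ := satChainIn_cons_cons_iff.1 h
      by_cases hq : p q
      · exact ⟨r, q, hxq, hx, hq, by simp⟩
      · obtain ⟨u, v, huv, hu, hv, hmem⟩ := ih h hq
        exact ⟨u, v, huv, hu, hv, by simp [hmem]⟩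

lemma eq_of_labelWord_eq (hinj : ∀ p q q' : P, p ⋖ q → p ⋖ q' → lab p q = lab p q' → q = q')
    {l l' : List P} (hl : SatChainIn x y l) (hl' : SatChainIn x y l')
    (hw : labelWord lab l = labelWord lab l') : l = l' := by
  induction l generalizing x l' with
  | nil => simp [SatChainIn] at hl
  | cons p k ih =>
    rcases l' with _ | ⟨p', _ | ⟨q', k'⟩⟩
    · simp [SatChainIn] at hl'
    · rcases k with _ | ⟨q, k⟩
      · rw [(satChainIn_singleton_iff.1 hl).1, (satChainIn_singleton_iff.1 hl').1]
      · simp at hw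
    · rcases k with _ | ⟨q, k⟩
      · simp at hw
      obtain ⟨rfl, hxq, htail⟩ := satChainIn_cons_cons_iff.1 hl
      obtain ⟨rfl, hxq', htail'⟩ := satChainIn_cons_cons_iff.1 hl'
      simp only [labelWord_cons_cons, List.cons.injEq] at hw
      obtain rfl := hinj _ _ _ hxq hxq' hw.1
      rw [ih htail htail' hw.2]

variable [Preorder Λ]

lemma isSwapAt_set {l : List P} (hl : l.IsChain (· ⋖ ·)) {j : ℕ} {u v w v' : P}
    (hu : l[j]? = some u) (hv : l[j + 1]? = some v) (hw : l[j + 1 + 1]? = some w)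
    (huv' : u ⋖ v') (hv'w : v' ⋖ w) (hlab₁ : lab u v' = lab v w) (hlab₂ : lab v' w = lab u v) :
    IsSwapAt lab l (j + 1) (l.set (j + 1) v') := by
  have hj : j + 1 < l.length := (List.getElem?_eq_some_iff.1 hv).1
  set l' := l.set (j + 1) v'
  have hmid : l'[j + 1]? = some v' := List.getElem?_set_self hj
  have hoff : ∀ m, m ≠ j + 1 → l'[m]? = l[m]? := fun m hm => List.getElem?_set_ne (Ne.symm hm)
  have ha : (labelWord lab l)[j]? = some (lab u v) :=
    getElem?_labelWord_eq_some.2 ⟨u, v, hu, hv, rfl⟩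
  have hb : (labelWord lab l)[j + 1]? = some (lab v w) :=
    getElem?_labelWord_eq_some.2 ⟨v, w, hv, hw, rfl⟩
  have hchain : l'.IsChain (· ⋖ ·) := List.isChain_of_getElem? fun n p q hp hq => by
    rcases (show n = j ∨ n = j + 1 ∨ (n ≠ j ∧ n ≠ j + 1) by omega) with rfl | rfl | ⟨h1, h2⟩
    · rw [hoff n (by omega), hu] at hp
      rw [hmid] at hq
      cases hp; cases hq; exact huv'
    · rw [hmid] at hp
      rw [hoff _ (by omega), hw] at hq
      cases hp; cases hq; exact hv'w
    · rw [hoff n h2] at hp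
      rw [hoff _ (by omega)] at hq
      exact hl.rel_of_getElem? hp hq
  have hword : labelWord lab l' =
      ((labelWord lab l).set j (lab v w)).set (j + 1) (lab u v) := by
    refine List.ext_getElem? fun n => ?_
    rcases (show n = j ∨ n = j + 1 ∨ (n ≠ j ∧ n ≠ j + 1) by omega) with rfl | rfl | ⟨h1, h2⟩
    · simp [getElem?_labelWord, List.getElem?_set', hoff, hu, hmid, ha, hlab₁]
    · simp [getElem?_labelWord, List.getElem?_set', hoff, hw, hmid, hb, hlab₂]
    · rw [List.getElem?_set_ne (Ne.symm h2), List.getElem?_set_ne (Ne.symm h1),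
        getElem?_labelWord, getElem?_labelWord, hoff n h2, hoff (n + 1) (by omega)]
  exact ⟨⟨List.ne_nil_of_length_pos (by rw [List.length_set]; omega), hchain⟩, List.length_set, hoff,
    _, _, ha, hb, hword⟩

lemma IsSwapAt.exists_eq_set {l l' : List P} {j : ℕ} (h : IsSwapAt lab l (j + 1) l') {u v w : P}
    (hu : l[j]? = some u) (hv : l[j + 1]? = some v) (hw : l[j + 1 + 1]? = some w) :
    ∃ v', l' = l.set (j + 1) v' ∧
      u ⋖ v' ∧ v' ⋖ w ∧ lab u v' = lab v w ∧ lab v' w = lab u v := by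
  obtain ⟨⟨-, hl'⟩, hlen, hoff, a, b, ha, hb, hword⟩ := h
  rw [Nat.add_sub_cancel, getElem?_labelWord_eq_some] at ha
  rw [getElem?_labelWord_eq_some] at hb
  obtain ⟨_, _, hu₁, hv₁, rfl⟩ := ha
  obtain ⟨_, _, hv₂, hw₂, rfl⟩ := hb
  simp only [hu, hv, hw, Option.some.injEq] at hu₁ hv₁ hv₂ hw₂
  subst hu₁ hv₁ hv₂ hw₂
  have hj : j + 1 < l'.length := hlen ▸ (List.getElem?_eq_some_iff.1 hv).1
  obtain ⟨v', hv'⟩ : ∃ v', l'[j + 1]? = some v' := ⟨_, List.getElem?_eq_getElem hj⟩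
  have hu' : l'[j]? = some u := (hoff j (by omega)).trans hu
  have hw' : l'[j + 1 + 1]? = some w := (hoff _ (by omega)).trans hw
  have hlab₁ : lab u v' = lab v w := by
    simpa [getElem?_labelWord, List.getElem?_set', hu, hv, hu', hv'] using congrArg (·[j]?) hword
  have hlab₂ : lab v' w = lab u v := by
    simpa [getElem?_labelWord, List.getElem?_set', hu, hv, hw, hv', hw']
      using congrArg (·[j + 1]?) hword
  refine ⟨v', List.ext_getElem? fun m => ?_, hl'.rel_of_getElem? hu' hv',
    hl'.rel_of_getElem? hv' hw', hlab₁, hlab₂⟩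
  by_cases hm : m = j + 1
  · rw [hm, hv', List.getElem?_set_self (hlen ▸ hj)]
  · rw [hoff m hm, List.getElem?_set_ne (Ne.symm hm)]

theorem rankTwoSwitch_of_existsUnique
    (h : ∀ u v w : P, u ⋖ v → v ⋖ w → lab u v < lab v w →
      ∃! v' : P, u ⋖ v' ∧ v' ⋖ w ∧ lab u v' = lab v w ∧ lab v' w = lab u v) :
    RankTwoSwitch lab := by
  rintro l i ⟨⟨-, hl⟩, hi, a, b, ha, hb, hab⟩
  obtain ⟨j, rfl⟩ : ∃ j, i = j + 1 := ⟨i - 1, by omega⟩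
  rw [Nat.add_sub_cancel, getElem?_labelWord_eq_some] at ha
  rw [getElem?_labelWord_eq_some] at hb
  obtain ⟨u, v, hu, hv, rfl⟩ := ha
  obtain ⟨v₁, w, hv₁, hw, rfl⟩ := hb
  obtain rfl : v = v₁ := Option.some.inj (hv.symm.trans hv₁)
  obtain ⟨v', ⟨huv', hv'w, hlab₁, hlab₂⟩, huniq⟩ :=
    h u v w (hl.rel_of_getElem? hu hv) (hl.rel_of_getElem? hv hw) hab
  refine ⟨_, isSwapAt_set hl hu hv hw huv' hv'w hlab₁ hlab₂, fun l' hl' => ?_⟩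
  obtain ⟨v'', rfl, hv''⟩ := hl'.exists_eq_set hu hv hw
  rw [huniq v'' hv'']

end Chains

section GeometricLattice

variable {L : Type} [Lattice L]

lemma CovBy.sup_eq_of_le_of_not_le {x y a : L} (h : x ⋖ y) (hay : a ≤ y) (hax : ¬ a ≤ x) :
    x ⊔ a = y :=
  (h.eq_or_eq le_sup_left (sup_le h.le hay)).resolve_left fun e => hax (e ▸ le_sup_right)

variable [OrderBot L]

lemma exists_isAtom_le_not_le [IsAtomistic L] {x y : L} (h : ¬ y ≤ x) :
    ∃ a, IsAtom a ∧ a ≤ y ∧ ¬ a ≤ x := by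
  simpa [le_iff_atom_le_imp (a := y)] using h

lemma covBy_sup_of_isAtom [IsUpperModularLattice L] {a x : L} (ha : IsAtom a) (hax : ¬ a ≤ x) :
    x ⋖ x ⊔ a := by
  have hinf : a ⊓ x = ⊥ := (ha.le_iff.1 inf_le_left).resolve_right fun h => hax (inf_eq_left.1 h)
  simpa [sup_comm] using covBy_sup_of_inf_covBy_left (hinf ▸ ha.bot_covBy)

def IsMinimumLabeling (ord : L → ℕ) (lab : L → L → L) : Prop :=
  ∀ x y : L, x ⋖ y → IsAtom (lab x y) ∧ x ⊔ lab x y = y ∧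
    ∀ a : L, IsAtom a → x ⊔ a = y → ord (lab x y) ≤ ord a

namespace IsMinimumLabeling

variable {ord : L → ℕ} {lab : L → L → L} (hlab : IsMinimumLabeling ord lab) {x y : L}
include hlab

lemma isAtom (h : x ⋖ y) : IsAtom (lab x y) := (hlab x y h).1

lemma sup_eq (h : x ⋖ y) : x ⊔ lab x y = y := (hlab x y h).2.1

lemma le (h : x ⋖ y) : lab x y ≤ y := le_sup_right.trans_eq (hlab.sup_eq h)

lemma not_le (h : x ⋖ y) : ¬ lab x y ≤ x := fun hle =>
  h.ne ((sup_eq_left.2 hle).symm.trans (hlab.sup_eq h))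

lemma ord_le {a : L} (h : x ⋖ y) (ha : IsAtom a) (hay : a ≤ y) (hax : ¬ a ≤ x) :
    ord (lab x y) ≤ ord a :=
  (hlab x y h).2.2 a ha (h.sup_eq_of_le_of_not_le hay hax)

lemma ord_lab_le_of_isIncreasing {q : L} {l : List L}
    (hl : SatChainIn x y (x :: q :: l))
    (hinc : IsIncreasing (labelWord (fun u v => ord (lab u v)) (x :: q :: l)))
    {a : L} (ha : IsAtom a) (hay : a ≤ y) (hax : ¬ a ≤ x) : ord (lab x q) ≤ ord a := by
  obtain ⟨u, v, huv, hau, hav, hmem⟩ := hl.exists_covBy_mem_labelWord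
    (lab := fun u v => ord (lab u v)) (p := (a ≤ ·)) hax hay
  refine le_trans ?_ (hlab.ord_le huv ha hav hau)
  rw [labelWord_cons_cons, List.mem_cons] at hmem
  rcases hmem with h | h
  · exact h.ge
  · exact (List.pairwise_cons.1 (List.isChain_iff_pairwise.1 hinc)).1 _ h |>.le

variable (hord : ∀ a b : L, IsAtom a → IsAtom b → ord a = ord b → a = b)
include hord

lemma lab_eq_of_ord_le {a : L} (h : x ⋖ y) (ha : IsAtom a) (hay : a ≤ y) (hax : ¬ a ≤ x)
    (hle : ord a ≤ ord (lab x y)) : lab x y = a :=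
  hord _ _ (hlab.isAtom h) ha (le_antisymm (hlab.ord_le h ha hay hax) hle)

lemma eq_of_ord_lab_eq {q q' : L} (hq : x ⋖ q) (hq' : x ⋖ q')
    (h : ord (lab x q) = ord (lab x q')) : q = q' := by
  rw [← hlab.sup_eq hq, ← hlab.sup_eq hq', hord _ _ (hlab.isAtom hq) (hlab.isAtom hq') h]

lemma exchange [IsUpperModularLattice L] {u v w : L} (huv : u ⋖ v) (hvw : v ⋖ w)
    (hasc : ord (lab u v) < ord (lab v w)) :
    u ⋖ u ⊔ lab v w ∧ u ⊔ lab v w ⋖ w ∧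
      lab u (u ⊔ lab v w) = lab v w ∧ lab (u ⊔ lab v w) w = lab u v := by
  set a := lab u v
  set b := lab v w
  set v' := u ⊔ b
  have hbv : ¬ b ≤ v := hlab.not_le hvw
  have huv' : u ⋖ v' := covBy_sup_of_isAtom (hlab.isAtom hvw) fun h => hbv (h.trans huv.le)
  have hv'w : v' ≤ w := sup_le (huv.le.trans hvw.le) (hlab.le hvw)
  have hv'v : v' ≠ v := fun h => hbv (h ▸ le_sup_right)
  have hmeet : v' ⊓ v = u := WCovBy.inf_eq huv'.wcovBy huv.wcovBy hv'v
  have hjoin : v ⊔ v' = w := hvw.sup_eq_of_le_of_not_le hv'w fun h => hbv (le_sup_right.trans h)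
  have hv'w : v' ⋖ w := hjoin ▸ covBy_sup_of_inf_covBy_left (by rwa [inf_comm, hmeet])
  have hlab₁ : lab u v' = b := by
    refine hlab.lab_eq_of_ord_le hord huv' (hlab.isAtom hvw) le_sup_right
      (fun h => hbv (h.trans huv.le)) ?_
    exact hlab.ord_le hvw (hlab.isAtom huv') ((hlab.le huv').trans hv'w.le)
      fun h => hlab.not_le huv' ((le_inf (hlab.le huv') h).trans_eq hmeet)
  have hlab₂ : lab v' w = a := by
    refine hlab.lab_eq_of_ord_le hord hv'w (hlab.isAtom huv) ((hlab.le huv).trans hvw.le)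
      (fun h => hlab.not_le huv ((le_inf h (hlab.le huv)).trans_eq hmeet)) ?_
    by_cases hcv : lab v' w ≤ v
    · exact hlab.ord_le huv (hlab.isAtom hv'w) hcv fun h => hlab.not_le hv'w (h.trans le_sup_left)
    · exact hasc.le.trans (hlab.ord_le hvw (hlab.isAtom hv'w) (hlab.le hv'w) hcv)
  exact ⟨huv', hv'w, hlab₁, hlab₂⟩

lemma existsUnique_swap [IsUpperModularLattice L] {u v w : L} (huv : u ⋖ v) (hvw : v ⋖ w)
    (hasc : ord (lab u v) < ord (lab v w)) :
    ∃! v', u ⋖ v' ∧ v' ⋖ w ∧ ord (lab u v') = ord (lab v w) ∧ ord (lab v' w) = ord (lab u v) := by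
  obtain ⟨huv', hv'w, hlab₁, hlab₂⟩ := hlab.exchange hord huv hvw hasc
  refine ⟨_, ⟨huv', hv'w, congrArg ord hlab₁, congrArg ord hlab₂⟩, fun v'' ⟨huv'', _, h, _⟩ => ?_⟩
  rw [← hlab.sup_eq huv'', hord _ _ (hlab.isAtom huv'') (hlab.isAtom hvw) h]

lemma rankTwoSwitch [IsUpperModularLattice L] : RankTwoSwitch fun u v => ord (lab u v) :=
  rankTwoSwitch_of_existsUnique fun _ _ _ => hlab.existsUnique_swap hord

lemma eq_of_isIncreasing {l l' : List L} (hl : SatChainIn x y l)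
    (hinc : IsIncreasing (labelWord (fun u v => ord (lab u v)) l)) (hl' : SatChainIn x y l')
    (hinc' : IsIncreasing (labelWord (fun u v => ord (lab u v)) l')) : l = l' := by
  induction l generalizing x l' with
  | nil => simp [SatChainIn] at hl
  | cons p k ih =>
    rcases l' with _ | ⟨p', _ | ⟨q', k'⟩⟩
    · simp [SatChainIn] at hl'
    · obtain ⟨rfl, rfl⟩ := satChainIn_singleton_iff.1 hl'
      rcases k with _ | ⟨q, k⟩
      · rw [(satChainIn_singleton_iff.1 hl).1]
      · exact absurd hl.lt_of_cons_cons (lt_irrefl _)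
    · rcases k with _ | ⟨q, k⟩
      · obtain ⟨rfl, rfl⟩ := satChainIn_singleton_iff.1 hl
        exact absurd hl'.lt_of_cons_cons (lt_irrefl _)
      obtain ⟨hp, hxq, htail⟩ := satChainIn_cons_cons_iff.1 hl
      obtain ⟨hp', hxq', htail'⟩ := satChainIn_cons_cons_iff.1 hl'
      subst p p'
      have hfirst : ord (lab x q) = ord (lab x q') := le_antisymm
        (hlab.ord_lab_le_of_isIncreasing hl hinc (hlab.isAtom hxq')
          ((hlab.le hxq').trans htail'.le) (hlab.not_le hxq'))
        (hlab.ord_lab_le_of_isIncreasing hl' hinc' (hlab.isAtom hxq)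
          ((hlab.le hxq).trans htail.le) (hlab.not_le hxq))
      obtain rfl := hlab.eq_of_ord_lab_eq hord hxq hxq' hfirst
      rw [ih htail (List.IsChain.tail hinc) htail' (List.IsChain.tail hinc')]

lemma exists_isIncreasing [Finite L] [IsAtomistic L] [IsUpperModularLattice L] (hxy : x ≤ y) :
    ∃ l, SatChainIn x y l ∧ IsIncreasing (labelWord (fun u v => ord (lab u v)) l) := by
  induction x using WellFoundedGT.induction with
  | _ x ih =>
  rcases hxy.eq_or_lt with rfl | hlt
  · exact ⟨[x], satChainIn_singleton_iff.2 ⟨rfl, rfl⟩, List.isChain_nil⟩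
  obtain ⟨a, ⟨ha, hay, hax⟩, hmin⟩ := Set.exists_min_image {a | IsAtom a ∧ a ≤ y ∧ ¬ a ≤ x} ord
    (Set.toFinite _) (exists_isAtom_le_not_le hlt.not_ge)
  have hxa : x ⋖ x ⊔ a := covBy_sup_of_isAtom ha hax
  obtain ⟨l, hl, hinc⟩ := ih _ hxa.lt (sup_le hxy hay)
  rcases l with _ | ⟨p, _ | ⟨q, l⟩⟩
  · simp [SatChainIn] at hl
  · obtain ⟨rfl, rfl⟩ := satChainIn_singleton_iff.1 hl
    exact ⟨[x, x ⊔ a], satChainIn_cons_cons_iff.2 ⟨rfl, hxa, hl⟩, List.isChain_singleton _⟩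
  · obtain ⟨rfl, hq, hl'⟩ := satChainIn_cons_cons_iff.1 hl
    have hc := hlab.not_le hq
    have hle : ord a ≤ ord (lab (x ⊔ a) q) :=
      hmin _ ⟨hlab.isAtom hq, (hlab.le hq).trans hl'.le, fun h => hc (h.trans le_sup_left)⟩
    have hne : ord a ≠ ord (lab (x ⊔ a) q) := fun h =>
      hc (hord _ _ ha (hlab.isAtom hq) h ▸ le_sup_right)
    exact ⟨x :: x ⊔ a :: q :: l, satChainIn_cons_cons_iff.2 ⟨rfl, hxa, hl⟩,
      List.isChain_cons_cons.2 ⟨(hlab.ord_le hxa ha le_sup_right hax).trans_lt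
        (lt_of_le_of_ne hle hne), hinc⟩⟩

lemma isER [Finite L] [IsAtomistic L] [IsUpperModularLattice L] :
    IsER fun u v => ord (lab u v) := fun _ _ hxy =>
  let ⟨l, hl, hinc⟩ := hlab.exists_isIncreasing hord hxy
  ⟨l, ⟨hl, hinc⟩, fun _ hl' => hlab.eq_of_isIncreasing hord hl'.1 hl'.2 hl hinc⟩

end IsMinimumLabeling

end GeometricLattice

/-- **Proposition.** Minimum labelings of geometric lattices are EW-labelings.
Let `L` be a finite geometric lattice (atomistic and semimodular) whose set of atoms is
totally ordered via an enumeration `ord` injective on atoms, and let `lab x y` be the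
smallest atom `a` with `x ⊔ a = y` for each cover `x ⋖ y`.  Then the edge labeling
`x ⋖ y ↦ ord (lab x y)` is an ER-labeling satisfying the rank two switching property,
and in each interval each maximal chain is uniquely determined by its word of labels. -/
theorem minimum_labeling_isEW {L : Type} [Lattice L] [Fintype L] [OrderBot L]
    (hatomistic : ∀ x : L, ∃ S : Finset L, (∀ a ∈ S, IsAtom a) ∧ x = S.sup id)
    (hsemimod : ∀ a b : L, a ⊓ b ⋖ a → b ⋖ a ⊔ b)
    (ord : L → ℕ) (hord : ∀ a b : L, IsAtom a → IsAtom b → ord a = ord b → a = b)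
    (lab : L → L → L)
    (hlab : ∀ x y : L, x ⋖ y → IsAtom (lab x y) ∧ x ⊔ lab x y = y ∧
      ∀ a : L, IsAtom a → x ⊔ a = y → ord (lab x y) ≤ ord a) :
    IsER (fun x y : L => ord (lab x y)) ∧
    RankTwoSwitch (fun x y : L => ord (lab x y)) ∧
    (∀ (x y : L) (l l' : List L), SatChainIn x y l → SatChainIn x y l' →
      labelWord (fun x y : L => ord (lab x y)) l =
        labelWord (fun x y : L => ord (lab x y)) l' → l = l') := by
  have : IsAtomistic L := ⟨fun y =>
    let ⟨S, hS, hy⟩ := hatomistic y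
    ⟨S, hy ▸ Finset.isLUB_sup_id, hS⟩⟩
  have : IsUpperModularLattice L := ⟨hsemimod _ _⟩
  have hmin : IsMinimumLabeling ord lab := hlab
  exact ⟨hmin.isER hord, hmin.rankTwoSwitch hord, fun _ _ _ _ hl hl' =>
    eq_of_labelWord_eq (lab := fun u v => ord (lab u v))
      (fun _ _ _ hq hq' => hmin.eq_of_ord_lab_eq hord hq hq') hl hl'⟩
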